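/- Let a, b ≥ 0 be real numbers. Then |√a − √b| ≤ √|a − b|. More generally, for a twice differentiable nonnegative function f : ℝ → ℝ with |f''| ≤ M, the function √f is Lipschitz with constant √(M/2), i.e., |√(f(x)) − √(f(y))| ≤ √(M/2)·|x − y|. -/

import Mathlib

/-!
The first claim holds for all real `a, b`, since `√a ^ 2 = max a 0`:
`(√a - √b)² ≤ |√a - √b| (√a + √b) = |max a 0 - max b 0| ≤ |a - b|`.

For the second, `y ↦ M y² / 2 - f y` is convex, so its tangent lines lie below it:
`f y ≤ f x + f' x (y - x) + M (y - x)² / 2`. Since `f ≥ 0` this quadratic in `y - x` is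
nonnegative, so its discriminant is `≤ 0`, i.e. `f' x ² ≤ 2 M f x`. Feeding this back,
`f y ≤ (√(f x) + √(M / 2) |y - x|)²`, and taking square roots gives the Lipschitz bound.
-/

open Set

theorem Real.abs_sqrt_sub_sqrt_le_sqrt_abs_sub (a b : ℝ) : |√a - √b| ≤ √|a - b| := by
  refine Real.abs_le_sqrt ?_
  calc (√a - √b) ^ 2 ≤ |√a - √b| * (√a + √b) := by
        rw [← sq_abs, sq]
        gcongr
        simpa only [abs_of_nonneg (Real.sqrt_nonneg _)] using abs_sub √a √b
    _ = |(√a - √b) * (√a + √b)| := by rw [abs_mul, abs_of_nonneg (by positivity : 0 ≤ √a + √b)]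
    _ = |max a 0 - max b 0| := by rw [← Real.sq_sqrt', ← Real.sq_sqrt']; congr 1; ring
    _ ≤ |a - b| := abs_max_sub_max_le_abs a b 0

theorem ConvexOn.add_deriv_mul_sub_le {S : Set ℝ} {g : ℝ → ℝ} {x y : ℝ} (hg : ConvexOn ℝ S g)
    (hx : x ∈ S) (hy : y ∈ S) (hgx : DifferentiableAt ℝ g x) :
    g x + deriv g x * (y - x) ≤ g y := by
  rcases lt_trichotomy x y with hxy | rfl | hyx
  · have := hg.deriv_le_slope hx hy hxy hgx
    rw [slope_def_field, le_div_iff₀ (sub_pos.2 hxy)] at this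
    linarith
  · simp
  · have := hg.slope_le_deriv hy hx hyx hgx
    rw [slope_def_field, div_le_iff₀ (sub_pos.2 hyx)] at this
    linarith

theorem le_add_deriv_mul_add_of_deriv_deriv_le {f : ℝ → ℝ} {M : ℝ} (hf : Differentiable ℝ f)
    (hf' : Differentiable ℝ (deriv f)) (hf'' : ∀ x, deriv (deriv f) x ≤ M) (x y : ℝ) :
    f y ≤ f x + deriv f x * (y - x) + M / 2 * (y - x) ^ 2 := by
  set g : ℝ → ℝ := fun y => M / 2 * y ^ 2 - f y
  have hg : ∀ y, HasDerivAt g (M * y - deriv f y) y := fun y => by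
    refine (((hasDerivAt_pow 2 y).const_mul (M / 2)).fun_sub (hf y).hasDerivAt).congr_deriv ?_
    ring
  have hg' : ∀ y, HasDerivAt (deriv g) (M - deriv (deriv f) y) y := by
    rw [funext fun y => (hg y).deriv]
    exact fun y => by simpa using ((hasDerivAt_id' y).const_mul M).fun_sub (hf' y).hasDerivAt
  have hconv : ConvexOn ℝ univ g :=
    convexOn_univ_of_deriv2_nonneg (fun y => (hg y).differentiableAt)
      (fun y => (hg' y).differentiableAt)
      (fun y => by simp only [Function.iterate_succ, Function.comp, Function.iterate_zero,
        id, (hg' y).deriv, sub_nonneg, hf'' y])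
  have := hconv.add_deriv_mul_sub_le (mem_univ x) (mem_univ y) (hg x).differentiableAt
  rw [(hg x).deriv] at this
  linear_combination this

theorem sq_deriv_le_two_mul_mul_of_nonneg_of_deriv_deriv_le {f : ℝ → ℝ} {M : ℝ}
    (hf₀ : ∀ x, 0 ≤ f x) (hf : Differentiable ℝ f) (hf' : Differentiable ℝ (deriv f))
    (hf'' : ∀ x, deriv (deriv f) x ≤ M) (x : ℝ) :
    deriv f x ^ 2 ≤ 2 * M * f x := by
  have := discrim_le_zero (a := M / 2) (b := deriv f x) (c := f x) fun t => by
    have := le_add_deriv_mul_add_of_deriv_deriv_le hf hf' hf'' x (x + t)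
    rw [add_sub_cancel_left] at this
    linear_combination this + hf₀ (x + t)
  rw [discrim] at this
  linarith

theorem sqrt_le_sqrt_add_mul_abs_sub_of_deriv_deriv_le {f : ℝ → ℝ} {M : ℝ}
    (hf₀ : ∀ x, 0 ≤ f x) (hf : Differentiable ℝ f) (hf' : Differentiable ℝ (deriv f))
    (hf'' : ∀ x, deriv (deriv f) x ≤ M) (hM : 0 ≤ M) (x y : ℝ) :
    √(f y) ≤ √(f x) + √(M / 2) * |y - x| := by
  have hderiv : |deriv f x| ≤ 2 * √(M / 2) * √(f x) := by
    refine abs_le_of_sq_le_sq ?_ (by positivity)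
    rw [mul_pow, mul_pow, Real.sq_sqrt (by positivity), Real.sq_sqrt (hf₀ x)]
    linarith [sq_deriv_le_two_mul_mul_of_nonneg_of_deriv_deriv_le hf₀ hf hf' hf'' x]
  rw [Real.sqrt_le_left (by positivity)]
  calc f y ≤ f x + deriv f x * (y - x) + M / 2 * (y - x) ^ 2 :=
        le_add_deriv_mul_add_of_deriv_deriv_le hf hf' hf'' x y
    _ ≤ f x + |deriv f x| * |y - x| + M / 2 * |y - x| ^ 2 := by
        rw [← abs_mul, sq_abs]
        gcongr
        exact le_abs_self _
    _ ≤ f x + 2 * √(M / 2) * √(f x) * |y - x| + M / 2 * |y - x| ^ 2 := by gcongr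
    _ = (√(f x) + √(M / 2) * |y - x|) ^ 2 := by
        rw [add_sq, mul_pow, Real.sq_sqrt (hf₀ x), Real.sq_sqrt (by positivity : 0 ≤ M / 2)]
        ring

theorem stmt_10 :
    (∀ a b : ℝ, 0 ≤ a → 0 ≤ b → |Real.sqrt a - Real.sqrt b| ≤ Real.sqrt |a - b|) ∧
      (∀ (f : ℝ → ℝ) (M : ℝ), (∀ x, 0 ≤ f x) →
        (∀ x, DifferentiableAt ℝ f x) → (∀ x, DifferentiableAt ℝ (deriv f) x) →
        (∀ x, |deriv (deriv f) x| ≤ M) →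
        ∀ x y, |Real.sqrt (f x) - Real.sqrt (f y)| ≤ Real.sqrt (M / 2) * |x - y|) := by
  refine ⟨fun a b _ _ => Real.abs_sqrt_sub_sqrt_le_sqrt_abs_sub a b,
    fun f M hf₀ hf hf' hf'' x y => ?_⟩
  have hM : 0 ≤ M := (abs_nonneg _).trans (hf'' 0)
  have hle := sqrt_le_sqrt_add_mul_abs_sub_of_deriv_deriv_le hf₀ hf hf'
    (fun z => (le_abs_self _).trans (hf'' z)) hM
  have hyx := hle x y
  rw [abs_sub_comm] at hyx
  rw [abs_sub_le_iff]
  constructor <;> linarith [hle y x]
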